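/- arXiv:2410.06021 — 5 statements merged into one kernel-verified Lean document; each statement's English description precedes it below -/
import Mathlib

section
/- Let H be a real Hilbert space, K ⊆ H a nonempty closed convex set, and a : H × H → ℝ a bounded, coercive (elliptic) bilinear form. Then for every bounded linear functional f on H there exists a unique u ∈ K such that a(u, v - u) ≥ f(v - u) for all v ∈ K. -/
open scoped InnerProductSpace

set_option maxHeartbeats 1000000 in
/-- Lions–Stampacchia theorem: for a bounded coercive bilinear form `a` on a real
Hilbert space `H` and a nonempty closed convex set `K`, every bounded linear
functional `f` admits a unique `u ∈ K` with `a u (v - u) ≥ f (v - u)` for all `v ∈ K`. -/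
theorem lions_stampacchia
    {H : Type*} [NormedAddCommGroup H] [InnerProductSpace ℝ H] [CompleteSpace H]
    (K : Set H) (hKne : K.Nonempty) (hKcl : IsClosed K) (hKcv : Convex ℝ K)
    (a : H →ₗ[ℝ] H →ₗ[ℝ] ℝ)
    (hbdd : ∃ M : ℝ, ∀ u v : H, |a u v| ≤ M * ‖u‖ * ‖v‖)
    (hcoer : ∃ c : ℝ, 0 < c ∧ ∀ v : H, a v v ≥ c * ‖v‖ ^ 2)
    (f : H →L[ℝ] ℝ) :
    ∃! u : H, u ∈ K ∧ ∀ v ∈ K, a u (v - u) ≥ f (v - u) := by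
  obtain ⟨M₀, hM₀⟩ := hbdd
  obtain ⟨c, hc, hco⟩ := hcoer
  set M : ℝ := max M₀ c with hMdef
  have hcM : c ≤ M := le_max_right _ _
  have hMpos : 0 < M := lt_of_lt_of_le hc hcM
  have hMne : M ≠ 0 := ne_of_gt hMpos
  have hMb : ∀ u v : H, |a u v| ≤ M * ‖u‖ * ‖v‖ := by
    intro u v
    refine (hM₀ u v).trans ?_
    have h1 : (0:ℝ) ≤ ‖u‖ * ‖v‖ := mul_nonneg (norm_nonneg _) (norm_nonneg _)
    have h2 : M₀ ≤ M := le_max_left _ _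
    nlinarith
  -- uniqueness
  have huniq : ∀ u₁ u₂ : H,
      (u₁ ∈ K ∧ ∀ v ∈ K, a u₁ (v - u₁) ≥ f (v - u₁)) →
      (u₂ ∈ K ∧ ∀ v ∈ K, a u₂ (v - u₂) ≥ f (v - u₂)) → u₁ = u₂ := by
    rintro u₁ u₂ ⟨h₁K, h₁⟩ ⟨h₂K, h₂⟩
    have A1 := h₁ u₂ h₂K
    have A2 := h₂ u₁ h₁K
    have e1 : u₁ - u₂ = -(u₂ - u₁) := by abel
    rw [e1, map_neg, map_neg] at A2
    have expand : a (u₂ - u₁) (u₂ - u₁) = a u₂ (u₂ - u₁) - a u₁ (u₂ - u₁) := by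
      rw [map_sub]; simp only [LinearMap.sub_apply, map_sub]; ring
    have hcz := hco (u₂ - u₁)
    have hle : ‖u₂ - u₁‖ ^ 2 = 0 :=
      le_antisymm (by nlinarith [sq_nonneg ‖u₂ - u₁‖]) (sq_nonneg _)
    have : u₂ - u₁ = 0 := by
      rwa [pow_eq_zero_iff (by norm_num : (2:ℕ) ≠ 0), norm_eq_zero] at hle
    rw [sub_eq_zero] at this
    exact this.symm
  -- the projection map onto K and its variational characterization
  have hKcomp : IsComplete K := hKcl.isComplete
  choose P hPmem hPdist using exists_norm_eq_iInf_of_complete_convex hKne hKcomp hKcv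
  have hPvi : ∀ x : H, ∀ w ∈ K, ⟪x - P x, w - P x⟫_ℝ ≤ 0 := fun x =>
    (norm_eq_iInf_iff_real_inner_le_zero hKcv (hPmem x)).1 (hPdist x)
  have hPlip : ∀ x y : H, ‖P x - P y‖ ≤ ‖x - y‖ := by
    intro x y
    have h1 := hPvi x (P y) (hPmem y)
    have h2 := hPvi y (P x) (hPmem x)
    have key : ‖P x - P y‖ ^ 2 ≤ ⟪x - y, P x - P y⟫_ℝ := by
      have hs : ⟪P x - P y, P x - P y⟫_ℝ = ‖P x - P y‖ ^ 2 :=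
        real_inner_self_eq_norm_sq _
      simp only [inner_sub_left, inner_sub_right] at h1 h2 hs ⊢
      linarith [real_inner_comm x (P x), real_inner_comm x (P y),
        real_inner_comm y (P x), real_inner_comm y (P y),
        real_inner_comm (P x) (P y), real_inner_comm x y]
    have hCS := real_inner_le_norm (x - y) (P x - P y)
    nlinarith [norm_nonneg (x - y), norm_nonneg (P x - P y)]
  -- Riesz representations
  have hrepr : ∀ x : H, ∃ w : H, ∀ v : H, ⟪w, v⟫_ℝ = a x v := by
    intro x
    let g : H →L[ℝ] ℝ := LinearMap.mkContinuous (a x) (M * ‖x‖) (fun v => by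
      rw [Real.norm_eq_abs]
      calc |a x v| ≤ M * ‖x‖ * ‖v‖ := hMb x v
        _ = (M * ‖x‖) * ‖v‖ := by ring)
    refine ⟨(InnerProductSpace.toDual ℝ H).symm g, fun v => ?_⟩
    rw [InnerProductSpace.toDual_symm_apply]
    rfl
  choose A hA using hrepr
  obtain ⟨F, hF⟩ : ∃ w : H, ∀ v : H, ⟪w, v⟫_ℝ = f v :=
    ⟨(InnerProductSpace.toDual ℝ H).symm f, fun v => by
      rw [InnerProductSpace.toDual_symm_apply]⟩
  -- contraction constant
  set ρ : ℝ := c / M ^ 2 with hρdef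
  have hρpos : 0 < ρ := div_pos hc (by positivity)
  set k : ℝ := Real.sqrt (1 - c ^ 2 / M ^ 2) with hkdef
  have hksq : k ^ 2 = 1 - c ^ 2 / M ^ 2 := by
    rw [hkdef, Real.sq_sqrt]
    have : c ^ 2 / M ^ 2 ≤ 1 := by
      rw [div_le_one (by positivity)]
      nlinarith
    linarith
  have hknn : 0 ≤ k := Real.sqrt_nonneg _
  have hk1 : k < 1 := by
    nlinarith [hksq, div_pos (by positivity : (0:ℝ) < c ^ 2) (by positivity : (0:ℝ) < M ^ 2)]
  -- the key contraction estimate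
  have hbound : ∀ z w : H, (∀ v : H, ⟪w, v⟫_ℝ = a z v) → ‖z - ρ • w‖ ≤ k * ‖z‖ := by
    intro z w hw
    have hwz : ⟪w, z⟫_ℝ = a z z := hw z
    have hww : ⟪w, w⟫_ℝ = a z w := hw w
    have hnw : ‖w‖ ≤ M * ‖z‖ := by
      have h1 : ‖w‖ ^ 2 = a z w := by rw [← real_inner_self_eq_norm_sq, hww]
      have h2 : a z w ≤ M * ‖z‖ * ‖w‖ := (abs_le.mp (hMb z w)).2
      nlinarith [norm_nonneg w, norm_nonneg z, mul_nonneg hMpos.le (norm_nonneg z)]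
    have hsq : ‖z - ρ • w‖ ^ 2 ≤ (k * ‖z‖) ^ 2 := by
      have e : ‖z - ρ • w‖ ^ 2 = ‖z‖ ^ 2 - 2 * ρ * ⟪w, z⟫_ℝ + ρ ^ 2 * ‖w‖ ^ 2 := by
        rw [norm_sub_sq_real, real_inner_smul_right, norm_smul, Real.norm_eq_abs,
          abs_of_pos hρpos, real_inner_comm]
        ring
      have hcoz := hco z
      have hρM : ρ ^ 2 * M ^ 2 = c ^ 2 / M ^ 2 := by
        rw [hρdef]; field_simp
      have hwsq : ‖w‖ ^ 2 ≤ M ^ 2 * ‖z‖ ^ 2 := by nlinarith [norm_nonneg w, norm_nonneg z]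
      have hρc : 2 * ρ * c = 2 * c ^ 2 / M ^ 2 := by rw [hρdef]; field_simp
      calc ‖z - ρ • w‖ ^ 2 = ‖z‖ ^ 2 - 2 * ρ * ⟪w, z⟫_ℝ + ρ ^ 2 * ‖w‖ ^ 2 := e
        _ ≤ ‖z‖ ^ 2 - 2 * ρ * (c * ‖z‖ ^ 2) + ρ ^ 2 * (M ^ 2 * ‖z‖ ^ 2) := by
            rw [hwz]; nlinarith [sq_nonneg ρ]
        _ = (1 - c ^ 2 / M ^ 2) * ‖z‖ ^ 2 := by
            rw [hρdef]; field_simp; ring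
        _ = (k * ‖z‖) ^ 2 := by rw [mul_pow, hksq]
    have hkz : 0 ≤ k * ‖z‖ := mul_nonneg hknn (norm_nonneg _)
    nlinarith [norm_nonneg (z - ρ • w)]
  -- the contraction map
  set T : H → H := fun x => P (x - ρ • (A x - F)) with hTdef
  have hTlip : ∀ x y : H, ‖T x - T y‖ ≤ k * ‖x - y‖ := by
    intro x y
    have h1 : ‖T x - T y‖ ≤ ‖(x - ρ • (A x - F)) - (y - ρ • (A y - F))‖ := hPlip _ _
    have e : (x - ρ • (A x - F)) - (y - ρ • (A y - F)) = (x - y) - ρ • (A x - A y) := by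
      rw [smul_sub, smul_sub, smul_sub]; abel
    rw [e] at h1
    refine h1.trans (hbound (x - y) (A x - A y) fun v => ?_)
    rw [inner_sub_left, hA x v, hA y v, map_sub]
    simp
  have hklt1 : (⟨k, hknn⟩ : NNReal) < 1 := by exact_mod_cast hk1
  have hT : ContractingWith ⟨k, hknn⟩ T := by
    refine ⟨hklt1, LipschitzWith.of_dist_le_mul fun x y => ?_⟩
    rw [dist_eq_norm, dist_eq_norm]
    exact hTlip x y
  -- fixed point
  have : Nonempty H := ⟨0⟩
  set u : H := ContractingWith.fixedPoint T hT with hudef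
  have hfix : T u = u := hT.fixedPoint_isFixedPt
  have huK : u ∈ K := by rw [← hfix]; exact hPmem _
  have hVI : ∀ v ∈ K, a u (v - u) ≥ f (v - u) := by
    intro v hv
    have h := hPvi (u - ρ • (A u - F)) v hv
    rw [show P (u - ρ • (A u - F)) = u from hfix] at h
    have e : u - ρ • (A u - F) - u = -(ρ • (A u - F)) := by abel
    rw [e, inner_neg_left, neg_nonpos, real_inner_smul_left] at h
    have h2 : 0 ≤ ⟪A u - F, v - u⟫_ℝ := nonneg_of_mul_nonneg_right h hρpos
    rw [inner_sub_left, hA u (v - u), hF (v - u)] at h2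
    linarith
  exact ⟨u, ⟨huK, hVI⟩, fun y hy => huniq y u hy ⟨huK, hVI⟩⟩
end

section
/- For real numbers λ, u, u₋, u₊ with u₋ ≤ u₊ and any c > 0, the complementarity conditions ((u₋ < u < u₊ and λ = 0) or (u = u₊ and λ ≤ 0) or (u = u₋ and λ ≥ 0)) hold together with u₋ ≤ u ≤ u₊ if and only if λ = min(0, λ + c(u₊ - u)) + max(0, λ + c(u₋ - u)). -/
/-- Pointwise reformulation of the bilateral complementarity conditions:
the KKT conditions together with the box constraint hold iff
`λ = min 0 (λ + c (u₊ - u)) + max 0 (λ + c (u₋ - u))`. -/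
theorem complementarity_minmax_reformulation
    (lam u um up c : ℝ) (hbar : um ≤ up) (hc : 0 < c) :
    (((um < u ∧ u < up ∧ lam = 0) ∨ (u = up ∧ lam ≤ 0) ∨ (u = um ∧ lam ≥ 0)) ∧
      um ≤ u ∧ u ≤ up) ↔
    lam = min 0 (lam + c * (up - u)) + max 0 (lam + c * (um - u)) := by
  constructor
  · rintro ⟨(⟨h3, h4, h5⟩ | ⟨h3, h4⟩ | ⟨h3, h4⟩), h1, h2⟩
    · rw [min_eq_left (by nlinarith), max_eq_left (by nlinarith)]; linarith
    · subst h3; rw [min_eq_right (by nlinarith), max_eq_left (by nlinarith)]; ring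
    · subst h3; rw [min_eq_left (by nlinarith), max_eq_right (by nlinarith)]; ring
  · intro h
    rcases le_total 0 (lam + c * (up - u)) with hA | hA <;>
      rcases le_total (lam + c * (um - u)) 0 with hB | hB
    · rw [min_eq_left hA, max_eq_left hB] at h
      rcases eq_or_lt_of_le (show u ≤ up by nlinarith) with he | hlt
      · exact ⟨Or.inr (Or.inl ⟨he, by linarith⟩), by nlinarith, le_of_eq he⟩
      · rcases eq_or_lt_of_le (show um ≤ u by nlinarith) with he2 | hlt2
        · exact ⟨Or.inr (Or.inr ⟨he2.symm, by linarith⟩), by linarith, by linarith⟩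
        · exact ⟨Or.inl ⟨hlt2, hlt, by linarith⟩, by linarith, by linarith⟩
    · rw [min_eq_left hA, max_eq_right hB] at h
      have hu : u = um := by nlinarith
      exact ⟨Or.inr (Or.inr ⟨hu, by nlinarith⟩), le_of_eq hu.symm, by linarith⟩
    · rw [min_eq_right hA, max_eq_left hB] at h
      have hu : u = up := by nlinarith
      exact ⟨Or.inr (Or.inl ⟨hu, by nlinarith⟩), by linarith, le_of_eq hu⟩
    · rw [min_eq_right hA, max_eq_right hB] at h
      have hBA : lam + c * (um - u) ≤ lam + c * (up - u) := by nlinarith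
      have h0 : lam + c * (up - u) = 0 := le_antisymm hA (le_trans hB hBA)
      have h0' : lam + c * (um - u) = 0 := le_antisymm (hBA.trans hA) hB
      have hl : lam = 0 := by linarith
      have hu : u = up := by nlinarith
      exact ⟨Or.inr (Or.inl ⟨hu, by nlinarith⟩), by nlinarith, le_of_eq hu⟩
end

section
/- Let u_ϱ ∈ K solve the variational inequality ⟨u_ϱ, v-u_ϱ⟩ + ϱ a(u_ϱ, v-u_ϱ) ≥ ⟨ū, v-u_ϱ⟩ for all v ∈ K, and let u_{ϱh} ∈ K_h ⊆ K solve the same inequality over K_h, where a is a bounded symmetric coercive bilinear form and ϱ > 0. Then ‖u_ϱ - u_{ϱh}‖² + ϱ a(u_ϱ - u_{ϱh}, u_ϱ - u_{ϱh}) ≤ 2 inf_{v_h ∈ K_h} (‖u_ϱ - ū‖·‖u_ϱ - v_h‖ + ϱ a(u_ϱ, u_ϱ) ^{1/2} a(u_ϱ - v_h, u_ϱ - v_h)^{1/2} + ‖u_ϱ - u_{ϱh}‖‖u_ϱ - v_h‖ + ϱ a(u_ϱ - u_{ϱh}, u_ϱ - u_{ϱh})^{1/2} a(u_ϱ - v_h,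 u_ϱ - v_h)^{1/2}). -/
/-- Cauchy–Schwarz inequality for a nonnegative symmetric bilinear form. -/
lemma cs_abs_form {H : Type*} [AddCommGroup H] [Module ℝ H]
    (a : H →ₗ[ℝ] H →ₗ[ℝ] ℝ) (hsym : ∀ u v : H, a u v = a v u)
    (hpos : ∀ v : H, 0 ≤ a v v) (u w : H) :
    |a u w| ≤ Real.sqrt (a u u) * Real.sqrt (a w w) := by
  have hq : ∀ t : ℝ, 0 ≤ a w w * (t * t) + 2 * a u w * t + a u u := by
    intro t
    have h := hpos (u + t • w)
    simp only [map_add, map_smul, LinearMap.add_apply, LinearMap.smul_apply,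
      smul_eq_mul] at h
    rw [hsym w u] at h
    nlinarith [h]
  have hd := discrim_le_zero hq
  rw [discrim] at hd
  have h2 : (a u w) ^ 2 ≤ a u u * a w w := by nlinarith
  calc |a u w| = Real.sqrt ((a u w) ^ 2) := (Real.sqrt_sq_eq_abs _).symm
    _ ≤ Real.sqrt (a u u * a w w) := Real.sqrt_le_sqrt h2
    _ = Real.sqrt (a u u) * Real.sqrt (a w w) := Real.sqrt_mul (hpos u) _

/-- Falk-type abstract error estimate for the conforming Galerkin discretization
of the first-kind variational inequality. -/
theorem falk_error_estimate
    {H : Type*} [NormedAddCommGroup H] [InnerProductSpace ℝ H] [CompleteSpace H]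
    (K Kh : Set H) (hKhK : Kh ⊆ K)
    (hKne : K.Nonempty) (hKcl : IsClosed K) (hKcv : Convex ℝ K)
    (hKhne : Kh.Nonempty) (hKhcl : IsClosed Kh) (hKhcv : Convex ℝ Kh)
    (a : H →ₗ[ℝ] H →ₗ[ℝ] ℝ)
    (hbdd : ∃ M : ℝ, ∀ u v : H, |a u v| ≤ M * ‖u‖ * ‖v‖)
    (hsym : ∀ u v : H, a u v = a v u)
    (hcoer : ∃ c : ℝ, 0 < c ∧ ∀ v : H, a v v ≥ c * ‖v‖ ^ 2)
    (ubar : H) (ϱ : ℝ) (hϱ : 0 < ϱ)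
    (uϱ uh : H) (huϱK : uϱ ∈ K) (huhKh : uh ∈ Kh)
    (hVI : ∀ v ∈ K, inner ℝ uϱ (v - uϱ) + ϱ * a uϱ (v - uϱ) ≥
      (inner ℝ ubar (v - uϱ) : ℝ))
    (hVIh : ∀ vh ∈ Kh, inner ℝ uh (vh - uh) + ϱ * a uh (vh - uh) ≥
      (inner ℝ ubar (vh - uh) : ℝ)) :
    ‖uϱ - uh‖ ^ 2 + ϱ * a (uϱ - uh) (uϱ - uh) ≤
      2 * sInf ((fun vh : H =>
        ‖uϱ - ubar‖ * ‖uϱ - vh‖ +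
        ϱ * Real.sqrt (a uϱ uϱ) * Real.sqrt (a (uϱ - vh) (uϱ - vh)) +
        ‖uϱ - uh‖ * ‖uϱ - vh‖ +
        ϱ * Real.sqrt (a (uϱ - uh) (uϱ - uh)) *
          Real.sqrt (a (uϱ - vh) (uϱ - vh))) '' Kh) := by
  obtain ⟨c, hc, hcoer'⟩ := hcoer
  have hpos : ∀ v : H, 0 ≤ a v v := fun v =>
    le_trans (by positivity) (hcoer' v)
  set f : H → ℝ := fun vh : H =>
        ‖uϱ - ubar‖ * ‖uϱ - vh‖ +
        ϱ * Real.sqrt (a uϱ uϱ) * Real.sqrt (a (uϱ - vh) (uϱ - vh)) +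
        ‖uϱ - uh‖ * ‖uϱ - vh‖ +
        ϱ * Real.sqrt (a (uϱ - uh) (uϱ - uh)) *
          Real.sqrt (a (uϱ - vh) (uϱ - vh)) with hf
  clear_value f
  have key : ∀ vh ∈ Kh,
      ‖uϱ - uh‖ ^ 2 + ϱ * a (uϱ - uh) (uϱ - uh) ≤ f vh := by
    intro vh hvh
    have h1 := hVI uh (hKhK huhKh)
    have h2 := hVIh vh hvh
    have c1 : (inner ℝ (ubar - uϱ) (uϱ - vh) : ℝ) ≤ ‖uϱ - ubar‖ * ‖uϱ - vh‖ := by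
      have h := real_inner_le_norm (ubar - uϱ) (uϱ - vh)
      rwa [norm_sub_rev ubar uϱ] at h
    have c2 : -(ϱ * a uϱ (uϱ - vh)) ≤
        ϱ * (Real.sqrt (a uϱ uϱ) * Real.sqrt (a (uϱ - vh) (uϱ - vh))) := by
      have h := cs_abs_form a hsym hpos uϱ (uϱ - vh)
      have h' := neg_abs_le (a uϱ (uϱ - vh))
      nlinarith
    have c3 : (inner ℝ (uϱ - uh) (uϱ - vh) : ℝ) ≤ ‖uϱ - uh‖ * ‖uϱ - vh‖ :=
      real_inner_le_norm _ _
    have c4 : ϱ * a (uϱ - uh) (uϱ - vh) ≤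
        ϱ * (Real.sqrt (a (uϱ - uh) (uϱ - uh)) *
          Real.sqrt (a (uϱ - vh) (uϱ - vh))) := by
      have h := cs_abs_form a hsym hpos (uϱ - uh) (uϱ - vh)
      have h' := le_abs_self (a (uϱ - uh) (uϱ - vh))
      nlinarith
    have hn : ‖uϱ - uh‖ ^ 2 = (inner ℝ (uϱ - uh) (uϱ - uh) : ℝ) :=
      (real_inner_self_eq_norm_sq _).symm
    rw [hf]
    simp only [inner_sub_left, inner_sub_right, map_sub, LinearMap.sub_apply]
      at h1 h2 c1 c2 c3 c4 hn ⊢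
    linarith [real_inner_comm uϱ uh, real_inner_comm uϱ vh,
      real_inner_comm uh vh, hsym uϱ uh, hsym uϱ vh, hsym uh vh,
      hsym vh uϱ, hsym uh uϱ]
  have hfnn : ∀ vh : H, 0 ≤ f vh := by
    intro vh
    rw [hf]
    have := Real.sqrt_nonneg (a uϱ uϱ)
    have := Real.sqrt_nonneg (a (uϱ - vh) (uϱ - vh))
    have := Real.sqrt_nonneg (a (uϱ - uh) (uϱ - uh))
    positivity
  obtain ⟨v0, hv0⟩ := hKhne
  have hlb : (‖uϱ - uh‖ ^ 2 + ϱ * a (uϱ - uh) (uϱ - uh)) / 2 ≤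
      sInf (f '' Kh) := by
    apply le_csInf ⟨f v0, Set.mem_image_of_mem _ hv0⟩
    rintro y ⟨vh, hvh, rfl⟩
    have := key vh hvh
    have := hfnn vh
    linarith
  linarith
end

section
/- Let T > 0 and for u(t) = Σ_k u_k sin((π/2+kπ)t/T) (finite sum) define H_T u(t) = Σ_k u_k cos((π/2+kπ)t/T). Then ⟨∂_t u, H_T u⟩_{L²(0,T)} = (T/2) Σ_k u_k² (π/2 + kπ)/T ≥ 0, with equality iff u = 0. -/
open Real

lemma int_cos_mul (T m : ℝ) (hT : T ≠ 0) (hm : m ≠ 0) :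
    ∫ t in (0:ℝ)..T, Real.cos (m * t / T) = T / m * Real.sin m := by
  have key : ∀ t : ℝ, HasDerivAt (fun t => T / m * Real.sin (m * t / T))
      (Real.cos (m * t / T)) t := by
    intro t
    have h1 : HasDerivAt (fun t : ℝ => m * t / T) (m / T) t := by
      simpa using ((hasDerivAt_id t).const_mul m).div_const T
    have := (Real.hasDerivAt_sin (m * t / T)).comp t h1
    have h2 := this.const_mul (T / m)
    refine h2.congr_deriv ?_
    have e : T / m * (m / T) = 1 := by rw [div_mul_div_comm, mul_comm T m, div_self (mul_ne_zero hm hT)]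
    rw [mul_comm (Real.cos _) (m / T), ← mul_assoc, e, one_mul]
  rw [intervalIntegral.integral_eq_sub_of_hasDerivAt (fun t _ => key t)
      ((Real.continuous_cos.comp (by continuity)).intervalIntegrable 0 T)]
  rw [mul_div_assoc, div_self hT, mul_one]; simp

lemma cos_orth (T : ℝ) (hT : 0 < T) (j k : ℕ) :
    ∫ t in (0:ℝ)..T,
      Real.cos ((Real.pi / 2 + j * Real.pi) * t / T) *
      Real.cos ((Real.pi / 2 + k * Real.pi) * t / T)
      = if j = k then T / 2 else 0 := by
  have hT' : T ≠ 0 := hT.ne'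
  set a : ℝ := Real.pi / 2 + j * Real.pi
  set b : ℝ := Real.pi / 2 + k * Real.pi
  have hab : a + b = ((j + k + 1 : ℤ) : ℝ) * Real.pi := by
    simp only [a, b]; push_cast; ring
  have habne : a + b ≠ 0 := by
    rw [hab]
    have : (0:ℝ) < ((j + k + 1 : ℤ) : ℝ) := by positivity
    positivity
  have hprod : ∀ t : ℝ, Real.cos (a * t / T) * Real.cos (b * t / T)
      = ((Real.cos ((a - b) * t / T)) + Real.cos ((a + b) * t / T)) / 2 := by
    intro t
    have h := Real.two_mul_cos_mul_cos (a * t / T) (b * t / T)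
    have e1 : a * t / T - b * t / T = (a - b) * t / T := by ring
    have e2 : a * t / T + b * t / T = (a + b) * t / T := by ring
    rw [e1, e2] at h; linarith
  simp_rw [hprod]
  rw [intervalIntegral.integral_div]
  rw [intervalIntegral.integral_add
    (Continuous.intervalIntegrable (by continuity) 0 T)
    (Continuous.intervalIntegrable (by continuity) 0 T)]
  have hsum : ∫ t in (0:ℝ)..T, Real.cos ((a + b) * t / T) = 0 := by
    rw [int_cos_mul T (a + b) hT' habne, hab, Real.sin_int_mul_pi, mul_zero]
  by_cases hjk : j = k
  · subst hjk
    have : a - b = 0 := by simp [a, b]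
    simp [this, hsum]
  · have hd : a - b = ((j - k : ℤ) : ℝ) * Real.pi := by
      simp only [a, b]; push_cast; ring
    have hdne : a - b ≠ 0 := by
      rw [hd]
      have : (j - k : ℤ) ≠ 0 := sub_ne_zero.mpr (by exact_mod_cast hjk)
      exact mul_ne_zero (Int.cast_ne_zero.mpr this) Real.pi_ne_zero
    have hdiff : ∫ t in (0:ℝ)..T, Real.cos ((a - b) * t / T) = 0 := by
      rw [int_cos_mul T (a - b) hT' hdne, hd, Real.sin_int_mul_pi, mul_zero]
    simp [hjk, hsum, hdiff]

lemma cont_cos (m T : ℝ) : Continuous fun t : ℝ => Real.cos (m * t / T) :=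
  Real.continuous_cos.comp ((continuous_const.mul continuous_id).div_const T)

lemma cont_term (A m T : ℝ) (n : ℝ) :
    Continuous fun t : ℝ => A * (Real.cos (m * t / T) * Real.cos (n * t / T)) :=
  continuous_const.mul ((cont_cos m T).mul (cont_cos n T))

lemma key_eq (T : ℝ) (hT : 0 < T) (s : Finset ℕ) (c : ℕ → ℝ) :
    (∫ t in (0:ℝ)..T,
        (∑ k ∈ s, c k * ((Real.pi / 2 + k * Real.pi) / T) *
          Real.cos ((Real.pi / 2 + k * Real.pi) * t / T)) *
        (∑ k ∈ s, c k * Real.cos ((Real.pi / 2 + k * Real.pi) * t / T)))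
      = (T / 2) * ∑ k ∈ s, c k ^ 2 * ((Real.pi / 2 + k * Real.pi) / T) := by
  have h1 : ∀ t : ℝ,
      (∑ k ∈ s, c k * ((Real.pi / 2 + k * Real.pi) / T) *
          Real.cos ((Real.pi / 2 + k * Real.pi) * t / T)) *
        (∑ k ∈ s, c k * Real.cos ((Real.pi / 2 + k * Real.pi) * t / T))
      = ∑ j ∈ s, ∑ k ∈ s, (c j * ((Real.pi / 2 + j * Real.pi) / T) * c k) *
          (Real.cos ((Real.pi / 2 + j * Real.pi) * t / T) *
           Real.cos ((Real.pi / 2 + k * Real.pi) * t / T)) := by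
    intro t
    rw [Finset.sum_mul_sum]
    exact Finset.sum_congr rfl fun j _ => Finset.sum_congr rfl fun k _ => by ring
  simp_rw [h1]
  rw [intervalIntegral.integral_finset_sum (fun j _ =>
    Continuous.intervalIntegrable (continuous_finset_sum _ fun k _ => cont_term _ _ _ _) 0 T)]
  rw [Finset.sum_congr rfl (fun j _ => intervalIntegral.integral_finset_sum (fun k _ =>
    Continuous.intervalIntegrable (cont_term _ _ _ _) 0 T))]
  have h2 : ∀ j ∈ s, ∀ k ∈ s,
      (∫ t in (0:ℝ)..T, (c j * ((Real.pi / 2 + j * Real.pi) / T) * c k) *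
          (Real.cos ((Real.pi / 2 + j * Real.pi) * t / T) *
           Real.cos ((Real.pi / 2 + k * Real.pi) * t / T)))
      = (c j * ((Real.pi / 2 + j * Real.pi) / T) * c k) * (if j = k then T / 2 else 0) := by
    intro j _ k _
    rw [intervalIntegral.integral_const_mul, cos_orth T hT]
  rw [Finset.sum_congr rfl fun j hj => Finset.sum_congr rfl fun k hk => h2 j hj k hk]
  rw [Finset.mul_sum]
  refine Finset.sum_congr rfl fun j hj => ?_
  rw [Finset.sum_eq_single j (fun k _ hk => by simp [Ne.symm hk]) (fun h => absurd hj h)]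
  simp only [if_pos rfl]
  have hT' : T ≠ 0 := hT.ne'
  field_simp
  rw [if_pos trivial]
  ring

/-- For a finite sine expansion `u(t) = Σ_k u_k sin((π/2 + kπ) t / T)` with
modified Hilbert transform `H_T u(t) = Σ_k u_k cos((π/2 + kπ) t / T)`, the
pairing `⟨∂_t u, H_T u⟩_{L²(0,T)}` equals `(T/2) Σ_k u_k² (π/2 + kπ)/T`, is
nonnegative, and vanishes iff `u = 0`. -/
theorem modified_hilbert_transform_posdef
    (T : ℝ) (hT : 0 < T) (s : Finset ℕ) (c : ℕ → ℝ) :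
    (∫ t in (0:ℝ)..T,
        (∑ k ∈ s, c k * ((Real.pi / 2 + k * Real.pi) / T) *
          Real.cos ((Real.pi / 2 + k * Real.pi) * t / T)) *
        (∑ k ∈ s, c k * Real.cos ((Real.pi / 2 + k * Real.pi) * t / T))
      = (T / 2) * ∑ k ∈ s, c k ^ 2 * ((Real.pi / 2 + k * Real.pi) / T)) ∧
    (0 ≤ ∫ t in (0:ℝ)..T,
        (∑ k ∈ s, c k * ((Real.pi / 2 + k * Real.pi) / T) *
          Real.cos ((Real.pi / 2 + k * Real.pi) * t / T)) *
        (∑ k ∈ s, c k * Real.cos ((Real.pi / 2 + k * Real.pi) * t / T))) ∧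
    ((∫ t in (0:ℝ)..T,
        (∑ k ∈ s, c k * ((Real.pi / 2 + k * Real.pi) / T) *
          Real.cos ((Real.pi / 2 + k * Real.pi) * t / T)) *
        (∑ k ∈ s, c k * Real.cos ((Real.pi / 2 + k * Real.pi) * t / T)) = 0)
      ↔ ∀ t : ℝ,
          (∑ k ∈ s, c k * Real.sin ((Real.pi / 2 + k * Real.pi) * t / T)) = 0) := by
  have hkey := key_eq T hT s c
  have hterm : ∀ k : ℕ, (0:ℝ) ≤ c k ^ 2 * ((Real.pi / 2 + k * Real.pi) / T) := by
    intro k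
    have := Real.pi_pos
    positivity
  refine ⟨hkey, ?_, ?_, ?_⟩
  · rw [hkey]
    exact mul_nonneg (by linarith) (Finset.sum_nonneg fun k _ => hterm k)
  · -- zero implies u = 0
    intro h0 t
    rw [hkey] at h0
    have hsum : ∑ k ∈ s, c k ^ 2 * ((Real.pi / 2 + k * Real.pi) / T) = 0 := by
      have : T / 2 ≠ 0 := by positivity
      exact (mul_eq_zero.mp h0).resolve_left this
    have hc : ∀ k ∈ s, c k = 0 := by
      intro k hk
      have := (Finset.sum_eq_zero_iff_of_nonneg fun k _ => hterm k).mp hsum k hk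
      have hq : (0:ℝ) < (Real.pi / 2 + k * Real.pi) / T := by
        have := Real.pi_pos; positivity
      have := (mul_eq_zero.mp this).resolve_right hq.ne'
      exact pow_eq_zero_iff (n := 2) (by norm_num) |>.mp this
    exact Finset.sum_eq_zero fun k hk => by rw [hc k hk, zero_mul]
  · -- u = 0 implies integral = 0
    intro h
    have hderiv : ∀ t : ℝ, HasDerivAt
        (fun t => ∑ k ∈ s, c k * Real.sin ((Real.pi / 2 + k * Real.pi) * t / T))
        (∑ k ∈ s, c k * ((Real.pi / 2 + k * Real.pi) / T) *
          Real.cos ((Real.pi / 2 + k * Real.pi) * t / T)) t := by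
      intro t
      refine HasDerivAt.fun_sum fun k _ => ?_
      have h1 : HasDerivAt (fun t : ℝ => (Real.pi / 2 + k * Real.pi) * t / T)
          ((Real.pi / 2 + k * Real.pi) / T) t := by
        simpa using ((hasDerivAt_id t).const_mul (Real.pi / 2 + k * Real.pi)).div_const T
      have := ((Real.hasDerivAt_sin ((Real.pi / 2 + k * Real.pi) * t / T)).comp t h1).const_mul
        (c k)
      refine this.congr_deriv ?_
      ring
    have hzero : ∀ t : ℝ, (∑ k ∈ s, c k * ((Real.pi / 2 + k * Real.pi) / T) *
        Real.cos ((Real.pi / 2 + k * Real.pi) * t / T)) = 0 := by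
      intro t
      have hf : (fun t => ∑ k ∈ s, c k * Real.sin ((Real.pi / 2 + k * Real.pi) * t / T))
          = fun _ : ℝ => (0:ℝ) := funext h
      have hd := hderiv t
      rw [hf] at hd
      exact hd.unique (hasDerivAt_const t 0)
    have : ∀ t : ℝ, (∑ k ∈ s, c k * ((Real.pi / 2 + k * Real.pi) / T) *
          Real.cos ((Real.pi / 2 + k * Real.pi) * t / T)) *
        (∑ k ∈ s, c k * Real.cos ((Real.pi / 2 + k * Real.pi) * t / T)) = 0 := by
      intro t; rw [hzero t, zero_mul]
    simp_rw [this]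
    simp
end

section
/- Let M_t, M_x be symmetric positive definite, A_t, A_x symmetric positive semidefinite, and ϱ > 0. Suppose xᵀA_t x ≤ α xᵀM_t x for all x and yᵀA_x y ≤ β yᵀM_x y for all y, for constants α, β ≥ 0. Then K = M_t ⊗ M_x + ϱ(A_t ⊗ M_x + M_t ⊗ A_x) satisfies zᵀ(M_t ⊗ M_x)z ≤ zᵀKz ≤ (1 + ϱ(α+β)) zᵀ(M_t ⊗ M_x)z for all z. -/
open Matrix Kronecker

lemma kron_posSemidef {ι κ : Type*} [Fintype ι] [Fintype κ] [DecidableEq ι]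
    [DecidableEq κ] {A : Matrix ι ι ℝ}
    {B : Matrix κ κ ℝ} (hA : A.PosSemidef) (hB : B.PosSemidef) :
    (A ⊗ₖ B).PosSemidef := by
  exact hA.kronecker hB

lemma psd_quad_nonneg {ι : Type*} [Fintype ι] {A : Matrix ι ι ℝ} (hA : A.PosSemidef)
    (x : ι → ℝ) : 0 ≤ x ⬝ᵥ A.mulVec x := by
  simpa using hA.dotProduct_mulVec_nonneg x

/-- Spectral equivalence of the regularized space-time stiffness matrix with
the space-time mass matrix `M_t ⊗ M_x`. -/
theorem stiffness_mass_spectral_equivalence {n m : ℕ}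
    (Mt At : Matrix (Fin n) (Fin n) ℝ) (Mx Ax : Matrix (Fin m) (Fin m) ℝ)
    (hMt : Mt.PosDef) (hMx : Mx.PosDef)
    (hAt : At.PosSemidef) (hAx : Ax.PosSemidef)
    (ϱ : ℝ) (hϱ : 0 < ϱ)
    (α β : ℝ) (hα : 0 ≤ α) (hβ : 0 ≤ β)
    (hAtbound : ∀ x : Fin n → ℝ, x ⬝ᵥ At.mulVec x ≤ α * (x ⬝ᵥ Mt.mulVec x))
    (hAxbound : ∀ y : Fin m → ℝ, y ⬝ᵥ Ax.mulVec y ≤ β * (y ⬝ᵥ Mx.mulVec y)) :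
    ∀ z : Fin n × Fin m → ℝ,
      z ⬝ᵥ (Mt ⊗ₖ Mx).mulVec z ≤
        z ⬝ᵥ (Mt ⊗ₖ Mx + ϱ • (At ⊗ₖ Mx + Mt ⊗ₖ Ax)).mulVec z ∧
      z ⬝ᵥ (Mt ⊗ₖ Mx + ϱ • (At ⊗ₖ Mx + Mt ⊗ₖ Ax)).mulVec z ≤
        (1 + ϱ * (α + β)) * (z ⬝ᵥ (Mt ⊗ₖ Mx).mulVec z) := by
  -- α • Mt - At is PSD
  have hαMt : (α • Mt - At).PosSemidef := by
    have hherm : (α • Mt - At).IsHermitian := by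
      have h1 : Mtᵀ = Mt := by simpa using hMt.1.eq
      have h2 : Atᵀ = At := by simpa using hAt.1.eq
      simp [Matrix.IsHermitian, Matrix.conjTranspose_sub, Matrix.conjTranspose_smul, h1, h2]
    refine .of_dotProduct_mulVec_nonneg hherm fun x => ?_
    have := hAtbound x
    simp only [star_trivial, sub_mulVec, dotProduct_sub, smul_mulVec,
      dotProduct_smul, smul_eq_mul]
    linarith
  have hβMx : (β • Mx - Ax).PosSemidef := by
    have hherm : (β • Mx - Ax).IsHermitian := by
      have h1 : Mxᵀ = Mx := by simpa using hMx.1.eq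
      have h2 : Axᵀ = Ax := by simpa using hAx.1.eq
      simp [Matrix.IsHermitian, Matrix.conjTranspose_sub, Matrix.conjTranspose_smul, h1, h2]
    refine .of_dotProduct_mulVec_nonneg hherm fun y => ?_
    have := hAxbound y
    simp only [star_trivial, sub_mulVec, dotProduct_sub, smul_mulVec,
      dotProduct_smul, smul_eq_mul]
    linarith
  intro z
  have h1 : 0 ≤ z ⬝ᵥ (At ⊗ₖ Mx).mulVec z :=
    psd_quad_nonneg (kron_posSemidef hAt hMx.posSemidef) z
  have h2 : 0 ≤ z ⬝ᵥ (Mt ⊗ₖ Ax).mulVec z :=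
    psd_quad_nonneg (kron_posSemidef hMt.posSemidef hAx) z
  have hub1 : z ⬝ᵥ (At ⊗ₖ Mx).mulVec z ≤ α * (z ⬝ᵥ (Mt ⊗ₖ Mx).mulVec z) := by
    have := psd_quad_nonneg (kron_posSemidef hαMt hMx.posSemidef) z
    have he : (α • Mt - At) ⊗ₖ Mx = α • (Mt ⊗ₖ Mx) - At ⊗ₖ Mx := by
      ext ⟨i, k⟩ ⟨j, l⟩
      simp [Matrix.kroneckerMap_apply]
      ring
    rw [he, sub_mulVec, dotProduct_sub, smul_mulVec, dotProduct_smul,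
      smul_eq_mul] at this
    linarith
  have hub2 : z ⬝ᵥ (Mt ⊗ₖ Ax).mulVec z ≤ β * (z ⬝ᵥ (Mt ⊗ₖ Mx).mulVec z) := by
    have := psd_quad_nonneg (kron_posSemidef hMt.posSemidef hβMx) z
    have he : Mt ⊗ₖ (β • Mx - Ax) = β • (Mt ⊗ₖ Mx) - Mt ⊗ₖ Ax := by
      ext ⟨i, k⟩ ⟨j, l⟩
      simp [Matrix.kroneckerMap_apply]
      ring
    rw [he, sub_mulVec, dotProduct_sub, smul_mulVec, dotProduct_smul,
      smul_eq_mul] at this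
    linarith
  have hexp : z ⬝ᵥ (Mt ⊗ₖ Mx + ϱ • (At ⊗ₖ Mx + Mt ⊗ₖ Ax)).mulVec z =
      z ⬝ᵥ (Mt ⊗ₖ Mx).mulVec z +
        ϱ * (z ⬝ᵥ (At ⊗ₖ Mx).mulVec z + z ⬝ᵥ (Mt ⊗ₖ Ax).mulVec z) := by
    simp [add_mulVec, dotProduct_add, smul_mulVec, mul_add]
  constructor
  · rw [hexp]; nlinarith
  · rw [hexp]
    have hnn : 0 ≤ z ⬝ᵥ (Mt ⊗ₖ Mx).mulVec z :=
      psd_quad_nonneg (kron_posSemidef hMt.posSemidef hMx.posSemidef) z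
    nlinarith
end
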